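/- arXiv:1709.08588 — 2 statements merged into one kernel-verified Lean document; each statement's English description precedes it below -/
import Mathlib

section
/- The convolution (q₀ * x₁²∂_{x₂} q₀)(1,0,0) = 0, where q₀ is the Gaussian kernel of the Kolmogorov-type operator with parameter S ≠ 0. -/
open Matrix Real MeasureTheory

noncomputable section

/-- `A = [[0,0],[S,0]]`. -/
def A (S : ℝ) : Matrix (Fin 2) (Fin 2) ℝ := !![0, 0; S, 0]

/-- `B = (1,0)ᵀ`. -/
def B : Matrix (Fin 2) (Fin 1) ℝ := !![1; 0]

/-- The Gramian `Γ_t = ∫₀ᵗ e^{-τA} B Bᵀ e^{-τAᵀ} dτ` (entrywise integral). -/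
def Γ (S t : ℝ) : Matrix (Fin 2) (Fin 2) ℝ :=
  Matrix.of fun i j =>
    ∫ τ in (0:ℝ)..t,
      (NormedSpace.exp ((-τ) • A S) * (B * Bᵀ) * NormedSpace.exp ((-τ) • (A S)ᵀ)) i j

/-- `G_t = e^{tA} Γ_t e^{tAᵀ}`. -/
def G (S t : ℝ) : Matrix (Fin 2) (Fin 2) ℝ :=
  NormedSpace.exp (t • A S) * Γ S t * NormedSpace.exp (t • (A S)ᵀ)

/-- The Gaussian fundamental solution of the Kolmogorov-type operator
`∂_t - S x₁ ∂_{x₂} - ½ ∂²_{x₁}`. -/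
def q (S : ℝ) (t : ℝ) (x y : Fin 2 → ℝ) : ℝ :=
  Real.exp (-(1/2) * ((y - NormedSpace.exp (t • A S) *ᵥ x) ⬝ᵥ
      ((G S t)⁻¹ *ᵥ (y - NormedSpace.exp (t • A S) *ᵥ x)))) /
    (2 * π * Real.sqrt (G S t).det)

/-! The kernel `q₀(t, x, y)` depends on `(x, y)` only through a quadratic form in
`y - e^{tA} x`, so it is invariant under `(x, y) ↦ (-x, -y)`. Hence `q₀(s, 0, ·)` is even and
`q₀(1 - s, ·, 0)` is even, its derivative along `e₂` is odd, and the whole integrand in `z` is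
odd. Its integral over the negation-invariant Lebesgue measure therefore vanishes for every `s`. -/

theorem Function.Odd.integral_eq_zero {G E : Type*} [MeasurableSpace G] [AddGroup G]
    [MeasurableNeg G] [NormedAddCommGroup E] [NormedSpace ℝ E] {f : G → E} (hf : f.Odd)
    (μ : Measure G) [μ.IsNegInvariant] : ∫ x, f x ∂μ = 0 := by
  have h := integral_neg_eq_self f μ
  simp only [hf.eq, integral_neg] at h
  have h2 : (2 : ℝ) • ∫ x, f x ∂μ = 0 := by
    rw [two_smul]; nth_rw 1 [← h]; exact neg_add_cancel _
  exact (smul_eq_zero.mp h2).resolve_left two_ne_zero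

theorem Function.Even.fderiv_apply_odd {E F : Type*} [NormedAddCommGroup E] [NormedSpace ℝ E]
    [NormedAddCommGroup F] [NormedSpace ℝ F] {f : E → F} (hf : f.Even) (v : E) :
    (fun z => fderiv ℝ f z v).Odd := by
  intro z
  have h := (ContinuousLinearEquiv.neg ℝ (M := E)).comp_right_fderiv (f := f) (x := -z)
  have hcomp : f ∘ ContinuousLinearEquiv.neg ℝ = f := funext fun w => hf w
  rw [hcomp] at h
  simp [h]

theorem q_neg_neg (S t : ℝ) (x y : Fin 2 → ℝ) : q S t (-x) (-y) = q S t x y := by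
  rw [q, q, mulVec_neg, ← neg_sub', mulVec_neg, neg_dotProduct, dotProduct_neg, neg_neg]

theorem q_even_source (S t : ℝ) : (fun x => q S t x 0).Even := fun x => by
  simpa using q_neg_neg S t x 0

theorem q_even_target (S t : ℝ) : (q S t 0).Even := fun y => by
  simpa using q_neg_neg S t 0 y

theorem stmt_13_general (S : ℝ) :
    (∫ s in (0:ℝ)..1, ∫ z : Fin 2 → ℝ,
      q S s 0 z * ((z 0)^2 * fderiv ℝ (fun w => q S (1 - s) w 0) z (Pi.single 1 1))) = 0 := by
  have hsq : (fun z : Fin 2 → ℝ => (z 0) ^ 2).Even := fun z => by simp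
  have hinner : ∀ s : ℝ, (∫ z : Fin 2 → ℝ,
      q S s 0 z * ((z 0)^2 * fderiv ℝ (fun w => q S (1 - s) w 0) z (Pi.single 1 1))) = 0 :=
    fun s => ((q_even_target S s).mul_odd
      (hsq.mul_odd ((q_even_source S (1 - s)).fderiv_apply_odd _))).integral_eq_zero volume
  simp [hinner]

/-- The Duhamel convolution `(q₀ * x₁²∂_{x₂} q₀)(1,0,0)` vanishes. -/
theorem stmt_13 (S : ℝ) (hS : S ≠ 0) :
    (∫ s in (0:ℝ)..1, ∫ z : Fin 2 → ℝ,
      q S s 0 z * ((z 0)^2 * fderiv ℝ (fun w => q S (1 - s) w 0) z (Pi.single 1 1))) = 0 :=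
  stmt_13_general S
end
end

section
/- The convolution (q₀ * x₁∂_{x₁} q₀)(1,0,0) = -½ · 1/(2π√det G₁), where q₀ is the Gaussian kernel associated with A = [[0,0],[S,0]], S ≠ 0, B = (1,0)ᵀ. -/
/-!
`A S` is nilpotent, so `e^{tA} = 1 + tA`; hence `G_t`, its inverse and `det G_t = t⁴ det G₁` are
explicit. For fixed `s` the `z`-integrand is then a quadratic polynomial times the exponential of
a negative definite quadratic form. A shear `(x, y) ↦ (x, y - k x)` completes the square
and splits this Gaussian into a product of one-dimensional ones, which gives the `z`-integral
`-(4s - 9s² + 6s³) / (2π √det G₁)`; finally `∫₀¹ (4s - 9s² + 6s³) ds = 1/2`.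
-/

open Matrix Real MeasureTheory

noncomputable section

theorem NormedSpace.exp_eq_one_add_of_mul_self_eq_zero {𝔸 : Type*} [Ring 𝔸] [Algebra ℚ 𝔸]
    [TopologicalSpace 𝔸] [IsTopologicalRing 𝔸] {x : 𝔸} (hx : x * x = 0) :
    NormedSpace.exp x = 1 + x := by
  have hpow : ∀ n ∉ Finset.range 2, ((n.factorial : ℚ)⁻¹ • x ^ n) = 0 := by
    intro n hn
    obtain ⟨k, rfl⟩ := Nat.exists_eq_add_of_le (not_lt.1 (Finset.mem_range.not.1 hn))
    rw [pow_add, sq, hx, zero_mul, smul_zero]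
  rw [NormedSpace.exp_eq_tsum ℚ]
  dsimp only
  rw [tsum_eq_sum hpow]
  simp [Finset.sum_range_succ]

lemma A_mul_self (S : ℝ) : A S * A S = 0 := by
  ext i j
  fin_cases i <;> fin_cases j <;> simp [A, Matrix.mul_apply]

lemma exp_smul_A (S t : ℝ) : NormedSpace.exp (t • A S) = !![1, 0; S * t, 1] := by
  rw [NormedSpace.exp_eq_one_add_of_mul_self_eq_zero (by rw [smul_mul_smul, A_mul_self, smul_zero])]
  ext i j
  fin_cases i <;> fin_cases j <;> simp [A, mul_comm]

lemma exp_smul_transpose_A (S t : ℝ) :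
    NormedSpace.exp (t • (A S)ᵀ) = !![1, S * t; 0, 1] := by
  rw [← Matrix.transpose_smul, Matrix.exp_transpose, exp_smul_A]
  ext i j
  fin_cases i <;> fin_cases j <;> rfl

lemma B_mul_transpose_B : B * Bᵀ = !![1, 0; 0, 0] := by
  ext i j
  fin_cases i <;> fin_cases j <;> simp [B, Matrix.mul_apply]

lemma Γ_eq (S t : ℝ) :
    Γ S t = !![t, -(S * t ^ 2 / 2); -(S * t ^ 2 / 2), S ^ 2 * t ^ 3 / 3] := by
  have integrand (τ : ℝ) : NormedSpace.exp ((-τ) • A S) * (B * Bᵀ) *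
      NormedSpace.exp ((-τ) • (A S)ᵀ) = !![1, -S * τ; -S * τ, S ^ 2 * τ ^ 2] := by
    rw [exp_smul_A, exp_smul_transpose_A, B_mul_transpose_B, Matrix.mul_fin_two,
      Matrix.mul_fin_two]
    ring_nf
  ext i j
  simp only [Γ, Matrix.of_apply, integrand]
  fin_cases i <;> fin_cases j <;>
    simp [mul_comm S, integral_pow] <;> ring

lemma G_eq (S t : ℝ) :
    G S t = !![t, S * t ^ 2 / 2; S * t ^ 2 / 2, S ^ 2 * t ^ 3 / 3] := by
  rw [G, Γ_eq, exp_smul_A, exp_smul_transpose_A, Matrix.mul_fin_two, Matrix.mul_fin_two]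
  ring_nf

lemma det_G (S t : ℝ) : (G S t).det = S ^ 2 * t ^ 4 / 12 := by
  rw [G_eq, Matrix.det_fin_two_of]
  ring

lemma sqrt_det_G (S t : ℝ) : √(G S t).det = t ^ 2 * √(G S 1).det := by
  rw [det_G, det_G, show S ^ 2 * t ^ 4 / 12 = (t ^ 2) ^ 2 * (S ^ 2 * 1 ^ 4 / 12) by ring,
    Real.sqrt_mul (by positivity), Real.sqrt_sq (by positivity)]

lemma inv_G {S t : ℝ} (hS : S ≠ 0) (ht : t ≠ 0) :
    (G S t)⁻¹ = !![4 / t, -(6 / (S * t ^ 2)); -(6 / (S * t ^ 2)), 12 / (S ^ 2 * t ^ 3)] := by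
  refine Matrix.inv_eq_right_inv ?_
  rw [G_eq, Matrix.mul_fin_two, Matrix.one_fin_two]
  ext i j
  fin_cases i <;> fin_cases j <;> simp <;> field_simp <;> ring

lemma q_zero_left {S t : ℝ} (hS : S ≠ 0) (ht : t ≠ 0) (z : Fin 2 → ℝ) :
    q S t 0 z = Real.exp (-(1 / 2) * (4 / t * z 0 ^ 2 - 12 / (S * t ^ 2) * (z 0 * z 1)
      + 12 / (S ^ 2 * t ^ 3) * z 1 ^ 2)) / (2 * π * √(G S t).det) := by
  rw [q, Matrix.mulVec_zero, sub_zero, inv_G hS ht]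
  congr 3
  simp [Matrix.mulVec, dotProduct, Fin.sum_univ_two]
  ring

lemma q_zero_right {S t : ℝ} (hS : S ≠ 0) (ht : t ≠ 0) (w : Fin 2 → ℝ) :
    q S t w 0 = Real.exp (-(1 / 2) * (4 / t * w 0 ^ 2 + 12 / (S * t ^ 2) * (w 0 * w 1)
      + 12 / (S ^ 2 * t ^ 3) * w 1 ^ 2)) / (2 * π * √(G S t).det) := by
  rw [q, inv_G hS ht, exp_smul_A]
  congr 3
  simp [Matrix.mulVec, dotProduct, Fin.sum_univ_two]
  field_simp
  ring

lemma fderiv_q_zero_right_apply_single_zero {S t : ℝ} (hS : S ≠ 0) (ht : t ≠ 0)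
    (z : Fin 2 → ℝ) :
    fderiv ℝ (fun w => q S t w 0) z (Pi.single 0 1)
      = -(1 / 2) * (8 / t * z 0 + 12 / (S * t ^ 2) * z 1) * q S t z 0 := by
  let e₀ := ContinuousLinearMap.proj (R := ℝ) (φ := fun _ : Fin 2 => ℝ) 0
  let e₁ := ContinuousLinearMap.proj (R := ℝ) (φ := fun _ : Fin 2 => ℝ) 1
  have h₀ : HasFDerivAt (fun w : Fin 2 → ℝ => w 0) e₀ z := e₀.hasFDerivAt
  have h₁ : HasFDerivAt (fun w : Fin 2 → ℝ => w 1) e₁ z := e₁.hasFDerivAt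
  have hq := ((((((h₀.pow 2).const_mul (4 / t)).add
    ((h₀.mul h₁).const_mul (12 / (S * t ^ 2)))).add
    ((h₁.pow 2).const_mul (12 / (S ^ 2 * t ^ 3)))).const_mul (-(1 / 2))).exp).mul_const
    (2 * π * √(G S t).det)⁻¹
  have hq' := hq.congr_of_eventuallyEq (f₁ := fun w => q S t w 0) (.of_forall fun w => by
    simp only [q_zero_right hS ht, div_eq_mul_inv, Pi.add_apply, Pi.mul_apply])
  rw [hq'.fderiv, q_zero_right hS ht]
  simp [e₀, e₁]
  ring

lemma integral_mul_exp_neg_mul_sq (b : ℝ) : ∫ x : ℝ, x * Real.exp (-b * x ^ 2) = 0 := by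
  have h := integral_neg_eq_self (fun x : ℝ => x * Real.exp (-b * x ^ 2)) volume
  simp only [neg_sq, neg_mul, integral_neg] at h ⊢
  linarith

lemma integral_sq_mul_exp_neg_mul_sq {b : ℝ} (hb : 0 < b) :
    ∫ x : ℝ, x ^ 2 * Real.exp (-b * x ^ 2) = √(π / b) / (2 * b) := by
  set v : ℝ → ℝ := fun y => -Real.exp (-b * y ^ 2) / (2 * b)
  have hv (x : ℝ) : HasDerivAt v (x * Real.exp (-b * x ^ 2)) x := by
    refine (((hasDerivAt_pow 2 x).const_mul (-b)).exp.neg.div_const (2 * b)).congr_deriv ?_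
    field_simp
    ring
  have hx_mul_v : Integrable fun x => x * v x := by
    simpa [v, mul_div_assoc'] using (integrable_mul_exp_neg_mul_sq hb).neg.div_const (2 * b)
  have hparts := integral_mul_deriv_eq_deriv_mul_of_integrable
    (fun x _ => hasDerivAt_id' x) (fun x _ => hv x)
    (show Integrable fun x => x * (x * Real.exp (-b * x ^ 2)) by
      simpa [pow_two, mul_assoc] using integrable_rpow_mul_exp_neg_mul_sq hb (s := 2) (by norm_num))
    (((integrable_exp_neg_mul_sq hb).neg.div_const (2 * b)).const_mul 1) hx_mul_v
  simp only [one_mul, ← mul_assoc, ← pow_two] at hparts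
  rw [hparts, integral_div, integral_neg, integral_gaussian]
  ring

lemma measurePreserving_shear (k : ℝ) :
    MeasurePreserving (fun p : ℝ × ℝ => (p.1, p.2 - k * p.1)) := by
  rw [Measure.volume_eq_prod]
  exact (MeasurePreserving.id volume).skew_product (by fun_prop)
    (.of_forall fun x => map_sub_right_eq_self volume (k * x))

lemma integral_quadratic_mul_exp_neg_quadratic_form {a b c : ℝ} (α β : ℝ) (hc : 0 < c)
    (hD : 0 < a * c - b ^ 2) :
    ∫ p : ℝ × ℝ, (α * p.1 ^ 2 + β * (p.1 * p.2)) *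
        Real.exp (-(a * p.1 ^ 2 + 2 * b * (p.1 * p.2) + c * p.2 ^ 2))
      = (α * c - β * b) * π / (2 * (a * c - b ^ 2) * √(a * c - b ^ 2)) := by
  set D := a * c - b ^ 2
  set k := b / c
  set d := D / c
  have hd : 0 < d := div_pos hD hc
  have hshear := measurePreserving_shear k
  have hsplit (p : ℝ × ℝ) :
      (α * p.1 ^ 2 + β * (p.1 * (p.2 - k * p.1))) *
        Real.exp (-(a * p.1 ^ 2 + 2 * b * (p.1 * (p.2 - k * p.1)) + c * (p.2 - k * p.1) ^ 2))
      = (α - β * k) * (p.1 ^ 2 * Real.exp (-d * p.1 ^ 2) * Real.exp (-c * p.2 ^ 2))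
        + β * (p.1 * Real.exp (-d * p.1 ^ 2) * (p.2 * Real.exp (-c * p.2 ^ 2))) := by
    have : -(a * p.1 ^ 2 + 2 * b * (p.1 * (p.2 - k * p.1)) + c * (p.2 - k * p.1) ^ 2)
        = -d * p.1 ^ 2 + -c * p.2 ^ 2 := by
      simp only [D, d, k]
      field_simp
      ring
    rw [this, Real.exp_add]
    ring
  have hsq := (integrable_rpow_mul_exp_neg_mul_sq hd (s := 2) (by norm_num)).mul_prod
    (integrable_exp_neg_mul_sq hc)
  have hodd := (integrable_mul_exp_neg_mul_sq hd).mul_prod (integrable_mul_exp_neg_mul_sq hc)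
  simp only [Real.rpow_two] at hsq
  rw [← hshear.map_eq, integral_map hshear.aemeasurable (by fun_prop)]
  simp only [hsplit]
  rw [Measure.volume_eq_prod, integral_add (hsq.const_mul _) (hodd.const_mul _),
    integral_const_mul, integral_const_mul,
    integral_prod_mul (fun x => x ^ 2 * Real.exp (-d * x ^ 2)) (fun y => Real.exp (-c * y ^ 2)),
    integral_prod_mul (fun x => x * Real.exp (-d * x ^ 2)) (fun y => y * Real.exp (-c * y ^ 2)),
    integral_sq_mul_exp_neg_mul_sq hd,
    integral_gaussian, integral_mul_exp_neg_mul_sq, zero_mul, mul_zero, add_zero]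
  have hsqrt : √(π / d) * √(π / c) = π / √D := by
    rw [← Real.sqrt_mul (by positivity),
      show π / d * (π / c) = π ^ 2 / D by simp only [d]; field_simp,
      Real.sqrt_div' _ hD.le, Real.sqrt_sq pi_pos.le]
  have hsqrtD : √D ≠ 0 := (Real.sqrt_pos.2 hD).ne'
  rw [div_mul_eq_mul_div, hsqrt]
  simp only [k, d]
  field_simp

lemma integral_fin_two_arrow_eq_integral_prod {E : Type*} [NormedAddCommGroup E]
    [NormedSpace ℝ E] (g : ℝ → ℝ → E) :
    ∫ z : Fin 2 → ℝ, g (z 0) (z 1) = ∫ p : ℝ × ℝ, g p.1 p.2 := by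
  rw [← (volume_preserving_finTwoArrow ℝ).symm.integral_comp']
  simp

lemma q_mul_fderiv_q_eq {S s t : ℝ} (hS : S ≠ 0) (hs : s ≠ 0) (ht : t ≠ 0)
    (z : Fin 2 → ℝ) :
    q S s 0 z * (z 0 * fderiv ℝ (fun w => q S t w 0) z (Pi.single 0 1))
      = (-(4 / t) * z 0 ^ 2 + -(6 / (S * t ^ 2)) * (z 0 * z 1)) *
          Real.exp (-((2 / s + 2 / t) * z 0 ^ 2
            + 2 * (3 / (S * t ^ 2) - 3 / (S * s ^ 2)) * (z 0 * z 1)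
            + (6 / (S ^ 2 * s ^ 3) + 6 / (S ^ 2 * t ^ 3)) * z 1 ^ 2))
        / (2 * π * √(G S s).det * (2 * π * √(G S t).det)) := by
  rw [fderiv_q_zero_right_apply_single_zero hS ht, q_zero_left hS hs, q_zero_right hS ht]
  have hexp : -((2 / s + 2 / t) * z 0 ^ 2
        + 2 * (3 / (S * t ^ 2) - 3 / (S * s ^ 2)) * (z 0 * z 1)
        + (6 / (S ^ 2 * s ^ 3) + 6 / (S ^ 2 * t ^ 3)) * z 1 ^ 2)
      = -(1 / 2) * (4 / s * z 0 ^ 2 - 12 / (S * s ^ 2) * (z 0 * z 1)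
          + 12 / (S ^ 2 * s ^ 3) * z 1 ^ 2)
        + -(1 / 2) * (4 / t * z 0 ^ 2 + 12 / (S * t ^ 2) * (z 0 * z 1)
          + 12 / (S ^ 2 * t ^ 3) * z 1 ^ 2) := by
    field_simp
    ring
  rw [hexp, Real.exp_add]
  field_simp
  ring

lemma integral_q_mul_fderiv_q {S s : ℝ} (hS : S ≠ 0) (hs₀ : 0 < s) (hs₁ : s < 1) :
    ∫ z : Fin 2 → ℝ,
        q S s 0 z * (z 0 * fderiv ℝ (fun w => q S (1 - s) w 0) z (Pi.single 0 1))
      = -(4 * s - 9 * s ^ 2 + 6 * s ^ 3) / (2 * π * √(G S 1).det) := by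
  have ht : 0 < 1 - s := sub_pos.2 hs₁
  simp_rw [q_mul_fderiv_q_eq hS hs₀.ne' ht.ne', sqrt_det_G S s, sqrt_det_G S (1 - s)]
  set t := 1 - s with ht_def
  set r := √(G S 1).det with hr_def
  have hr : 0 < r := Real.sqrt_pos.2 (by rw [det_G]; positivity)
  have hSr : S ^ 2 = 12 * r ^ 2 := by
    rw [hr_def, Real.sq_sqrt (by rw [det_G]; positivity), det_G]
    ring
  set a := 2 / s + 2 / t
  set b := 3 / (S * t ^ 2) - 3 / (S * s ^ 2)
  set c := 6 / (S ^ 2 * s ^ 3) + 6 / (S ^ 2 * t ^ 3)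
  set α := -(4 / t)
  set β := -(6 / (S * t ^ 2))
  have hc : 0 < c := by positivity
  have hD : a * c - b ^ 2 = (1 / (2 * r * s ^ 2 * t ^ 2)) ^ 2 := calc
    a * c - b ^ 2 = 3 / (S ^ 2 * s ^ 4 * t ^ 4) := by
      simp only [a, b, c]
      field_simp
      ring
    _ = _ := by
      rw [hSr]
      field_simp
      ring
  have hαβ : α * c - β * b
      = -(4 * s * t ^ 3 + s ^ 4 + 3 * s ^ 2 * t ^ 2) / (2 * r ^ 2 * s ^ 4 * t ^ 4) := calc
    α * c - β * b
        = -6 * (4 * s * t ^ 3 + s ^ 4 + 3 * s ^ 2 * t ^ 2) / (S ^ 2 * s ^ 4 * t ^ 4) := by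
      simp only [α, β, b, c]
      field_simp
      ring
    _ = _ := by
      rw [hSr]
      field_simp
      ring
  rw [integral_div, integral_fin_two_arrow_eq_integral_prod (fun x y =>
      (α * x ^ 2 + β * (x * y)) * Real.exp (-(a * x ^ 2 + 2 * b * (x * y) + c * y ^ 2))),
    integral_quadratic_mul_exp_neg_quadratic_form α β hc (by rw [hD]; positivity), hD,
    Real.sqrt_sq (by positivity), hαβ]
  field_simp
  rw [ht_def]
  ring

/-- The Duhamel convolution `(q₀ * x₁∂_{x₁} q₀)(1,0,0) = -½ · 1/(2π√det G₁)`. -/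
theorem stmt_14 (S : ℝ) (hS : S ≠ 0) :
    (∫ s in (0:ℝ)..1, ∫ z : Fin 2 → ℝ,
      q S s 0 z * (z 0 * fderiv ℝ (fun w => q S (1 - s) w 0) z (Pi.single 0 1))) =
    -(1/2) * (1 / (2 * π * Real.sqrt (G S 1).det)) := by
  have hpoly : ∫ s in (0:ℝ)..1, (4 * s - 9 * s ^ 2 + 6 * s ^ 3) = 1 / 2 := by
    rw [intervalIntegral.integral_add, intervalIntegral.integral_sub,
      intervalIntegral.integral_const_mul, intervalIntegral.integral_const_mul,
      intervalIntegral.integral_const_mul, integral_id, integral_pow, integral_pow]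
    · norm_num
    all_goals exact Continuous.intervalIntegrable (by fun_prop) _ _
  rw [intervalIntegral.integral_congr_Ioo_of_le zero_le_one
      fun s hs => integral_q_mul_fderiv_q hS hs.1 hs.2,
    intervalIntegral.integral_div, intervalIntegral.integral_neg, hpoly]
  ring
end
end
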